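/- arXiv:1810.12943 — 6 statements merged into one kernel-verified Lean document; each statement's English description precedes it below -/
import Mathlib

section
/- Let n ≥ 1, let V = ℂ^{2n+1} with standard basis e_1, …, e_{2n+1}, fix a vector a ∈ V, an index i ∈ {1,…,2n+1}, and vectors p_j ∈ V for each j ≠ i. Then the map f : V → Λ(V) defined by f(v) = a ∧ (v ∧ e_i + Σ_{j≠i} p_j ∧ e_j)^n (the n-th power taken in the exterior algebra) is affine: there exist a ℂ-linear map L : V → Λ(V) and an element c ∈ Λ(V) such that f(v) = L(v) + c for all v ∈ V. -/
open ExteriorAlgebra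

lemma ext_ι_swap {R M : Type*} [CommRing R] [AddCommGroup M] [Module R M]
    (x y : M) : ι R x * ι R y = -(ι R y * ι R x) := by
  rw [eq_neg_iff_add_eq_zero]
  exact ι_add_mul_swap x y

lemma ext_pair_mul_ι {R M : Type*} [CommRing R] [AddCommGroup M] [Module R M]
    (x y z : M) : (ι R x * ι R y) * ι R z = ι R z * (ι R x * ι R y) := by
  calc ι R x * ι R y * ι R z
      = ι R x * (ι R y * ι R z) := by noncomm_ring
    _ = ι R x * (-(ι R z * ι R y)) := by rw [ext_ι_swap y z]
    _ = -(ι R x * ι R z) * ι R y := by noncomm_ring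
    _ = -(-(ι R z * ι R x)) * ι R y := by rw [ext_ι_swap x z]
    _ = ι R z * (ι R x * ι R y) := by noncomm_ring

lemma ext_pair_commute {R M : Type*} [CommRing R] [AddCommGroup M] [Module R M]
    (x y z w : M) : Commute (ι R x * ι R y) (ι R z * ι R w) := by
  unfold Commute SemiconjBy
  calc ι R x * ι R y * (ι R z * ι R w)
      = (ι R x * ι R y * ι R z) * ι R w := by noncomm_ring
    _ = (ι R z * (ι R x * ι R y)) * ι R w := by rw [ext_pair_mul_ι]
    _ = ι R z * ((ι R x * ι R y) * ι R w) := by noncomm_ring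
    _ = ι R z * (ι R w * (ι R x * ι R y)) := by rw [ext_pair_mul_ι]
    _ = ι R z * ι R w * (ι R x * ι R y) := by noncomm_ring

lemma sq_zero_add_pow {A : Type*} [Ring A] (x y : A) (h : Commute x y)
    (hx : x * x = 0) : ∀ n : ℕ, 1 ≤ n →
    (x + y) ^ n = n • (x * y ^ (n - 1)) + y ^ n := by
  intro n hn
  induction n with
  | zero => omega
  | succ m ih =>
    rcases Nat.eq_or_lt_of_le hn with h1 | h1
    · simp [← h1]
    · have hm : 1 ≤ m := by omega
      have := ih hm
      rw [pow_succ, this]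
      have hyx : y ^ (m - 1) * x = x * y ^ (m - 1) := ((h.symm).pow_left _).eq
      have hyx2 : y ^ m * x = x * y ^ m := ((h.symm).pow_left _).eq
      have hsm : m + 1 - 1 = m := rfl
      have hm1 : m - 1 + 1 = m := by omega
      rw [hsm]
      calc (m • (x * y ^ (m - 1)) + y ^ m) * (x + y)
          = m • (x * (y ^ (m-1) * x)) + m • (x * y ^ (m-1) * y) + y ^ m * x + y ^ (m+1) := by
            rw [pow_succ]
            simp only [mul_add, add_mul, smul_mul_assoc, mul_assoc]
            abel
        _ = m • (x * (x * y ^ (m-1))) + m • (x * y ^ (m-1) * y) + x * y ^ m + y ^ (m+1) := by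
            rw [hyx, hyx2]
        _ = m • ((x * x) * y ^ (m-1)) + m • (x * y ^ m) + x * y ^ m + y ^ (m+1) := by
            rw [show x * y ^ (m-1) * y = x * y ^ m by rw [mul_assoc, ← pow_succ, hm1],
              show x * (x * y ^ (m-1)) = x * x * y ^ (m-1) from (mul_assoc _ _ _).symm]
        _ = (m + 1) • (x * y ^ m) + y ^ (m+1) := by
            rw [hx, zero_mul, smul_zero, zero_add, succ_nsmul]

set_option maxHeartbeats 1000000 in
/-- The contact expression `a ∧ (v ∧ e_i + Σ_{j≠i} p_j ∧ e_j)^n` in the exterior algebra of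
`ℂ^{2n+1}` is an affine function of the vector `v` (the `i`-th row of the jet matrix). -/
theorem contact_expression_affine_in_row
    (n : ℕ) (hn : 1 ≤ n)
    (a : Fin (2 * n + 1) → ℂ) (i : Fin (2 * n + 1))
    (p : Fin (2 * n + 1) → (Fin (2 * n + 1) → ℂ)) :
    ∃ (L : (Fin (2 * n + 1) → ℂ) →ₗ[ℂ] ExteriorAlgebra ℂ (Fin (2 * n + 1) → ℂ))
      (c : ExteriorAlgebra ℂ (Fin (2 * n + 1) → ℂ)),
      ∀ v : Fin (2 * n + 1) → ℂ,
        ExteriorAlgebra.ι ℂ a *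
          (ExteriorAlgebra.ι ℂ v * ExteriorAlgebra.ι ℂ (Pi.single i 1) +
            ∑ j ∈ Finset.univ.erase i,
              ExteriorAlgebra.ι ℂ (p j) * ExteriorAlgebra.ι ℂ (Pi.single j 1)) ^ n
          = L v + c := by
  set β : ExteriorAlgebra ℂ (Fin (2 * n + 1) → ℂ) := ∑ j ∈ Finset.univ.erase i,
      ExteriorAlgebra.ι ℂ (p j) * ExteriorAlgebra.ι ℂ (Pi.single j 1) with hβ
  refine ⟨(n : ℂ) • ((LinearMap.mulRight ℂ (ι ℂ (Pi.single i 1 : Fin (2 * n + 1) → ℂ) * β ^ (n - 1))).comp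
      ((LinearMap.mulLeft ℂ (ι ℂ a)).comp (ι ℂ))),
    ι ℂ a * β ^ n, fun v => ?_⟩
  have hcomm : Commute (ι ℂ v * ι ℂ (Pi.single i 1 : Fin (2 * n + 1) → ℂ)) β := by
    rw [hβ]
    exact Commute.sum_right _ _ _ fun j _ => ext_pair_commute _ _ _ _
  have hx : (ι ℂ v * ι ℂ (Pi.single i 1 : Fin (2 * n + 1) → ℂ)) * (ι ℂ v * ι ℂ (Pi.single i 1 : Fin (2 * n + 1) → ℂ)) = 0 := by
    calc ι ℂ v * ι ℂ (Pi.single i 1 : Fin (2 * n + 1) → ℂ) * (ι ℂ v * ι ℂ (Pi.single i 1 : Fin (2 * n + 1) → ℂ))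
        = (ι ℂ v * ι ℂ (Pi.single i 1 : Fin (2 * n + 1) → ℂ) * ι ℂ v) * ι ℂ (Pi.single i 1 : Fin (2 * n + 1) → ℂ) := by noncomm_ring
      _ = (ι ℂ v * (ι ℂ v * ι ℂ (Pi.single i 1 : Fin (2 * n + 1) → ℂ))) * ι ℂ (Pi.single i 1 : Fin (2 * n + 1) → ℂ) := by
          rw [ext_pair_mul_ι]
      _ = (ι ℂ v * ι ℂ v) * (ι ℂ (Pi.single i 1 : Fin (2 * n + 1) → ℂ) * ι ℂ (Pi.single i 1 : Fin (2 * n + 1) → ℂ)) := by noncomm_ring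
      _ = 0 := by rw [ι_sq_zero, zero_mul]
  rw [sq_zero_add_pow _ _ hcomm hx n hn, mul_add]
  congr 1
  simp only [LinearMap.smul_apply, LinearMap.comp_apply, LinearMap.mulRight_apply,
    LinearMap.mulLeft_apply]
  rw [mul_smul_comm, Nat.cast_smul_eq_nsmul]
  congr 1
  noncomm_ring
end

section
/- Let E be a finite-dimensional normed vector space over ℂ, let ℓ : E → ℂ be a ℂ-linear functional and let c ∈ ℂ, with ℓ and c not both zero. Then the set Ω = {v ∈ E : ℓ(v) + c ≠ 0} is path-connected, and its real convex hull is all of E: convexHull ℝ Ω = E (as sets, convexHull ℝ Ω = Set.univ). -/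
/-- The nonvanishing set of a nonzero complex affine function on a finite-dimensional
complex normed space is path-connected and its real convex hull is the whole space. -/
theorem nonvanishing_set_of_affine_isPathConnected_and_convexHull_univ
    {E : Type*} [NormedAddCommGroup E] [NormedSpace ℂ E] [FiniteDimensional ℂ E]
    (ℓ : E →ₗ[ℂ] ℂ) (c : ℂ) (h : ¬(ℓ = 0 ∧ c = 0)) :
    IsPathConnected {v : E | ℓ v + c ≠ 0} ∧
      convexHull ℝ {v : E | ℓ v + c ≠ 0} = Set.univ := by
  by_cases hl : ℓ = 0
  · have hc : c ≠ 0 := fun hc => h ⟨hl, hc⟩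
    have huniv : {v : E | ℓ v + c ≠ 0} = Set.univ := by
      ext v; simp [hl, hc]
    rw [huniv]
    exact ⟨(convex_univ).isPathConnected ⟨0, trivial⟩, convexHull_univ⟩
  · -- ℓ ≠ 0 : get u with ℓ u ≠ 0
    obtain ⟨u, hu⟩ : ∃ u, ℓ u ≠ 0 := by
      by_contra hcon
      push_neg at hcon
      exact hl (LinearMap.ext fun v => by simpa using hcon v)
    constructor
    · -- path connected
      set K : Submodule ℝ E := LinearMap.ker (ℓ.restrictScalars ℝ) with hK
      have hcodim : 1 < Module.rank ℝ (E ⧸ K) := by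
        have e1 : (E ⧸ K) ≃ₗ[ℝ] LinearMap.range (ℓ.restrictScalars ℝ) :=
          (ℓ.restrictScalars ℝ).quotKerEquivRange
        have hr : LinearMap.range (ℓ.restrictScalars ℝ) = ⊤ := by
          rw [LinearMap.range_eq_top]
          intro z
          exact ⟨(z / ℓ u) • u, by simp [div_mul_cancel₀, hu]⟩
        have e3 : LinearMap.range (ℓ.restrictScalars ℝ) ≃ₗ[ℝ] ℂ :=
          LinearEquiv.ofTop (LinearMap.range (ℓ.restrictScalars ℝ)) hr
        have e2 : (E ⧸ K) ≃ₗ[ℝ] ℂ := e1.trans e3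
        have h2 : Cardinal.lift.{0} (Module.rank ℝ (E ⧸ K)) = 2 :=
          e2.lift_rank_eq.trans Complex.rank_real_complex'
        have hlt : Cardinal.lift.{0} (1 : Cardinal) <
            Cardinal.lift.{0} (Module.rank ℝ (E ⧸ K)) := by
          rw [h2, Cardinal.lift_one]
          norm_num
        exact Cardinal.lift_lt.mp hlt
      have hKc : IsPathConnected (Kᶜ : Set E) :=
        isPathConnected_compl_of_one_lt_codim hcodim
      obtain ⟨v₀, hv₀⟩ : ∃ v₀, ℓ v₀ = -c :=
        ⟨(-c / ℓ u) • u, by simp [div_mul_cancel₀, hu]⟩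
      have himg : (fun w => w + v₀) '' (Kᶜ : Set E) = {v : E | ℓ v + c ≠ 0} := by
        ext v
        constructor
        · rintro ⟨w, hw, rfl⟩
          have hw' : ℓ w ≠ 0 := by simpa [hK] using hw
          simp only [Set.mem_setOf_eq, map_add, hv₀]
          simpa using hw'
        · intro hv
          refine ⟨v - v₀, ?_, by simp⟩
          have : ℓ (v - v₀) ≠ 0 := by
            rw [map_sub, hv₀, sub_neg_eq_add]
            exact hv
          simpa [hK] using this
      rw [← himg]
      exact hKc.image (continuous_add_right v₀)
    · -- convex hull is everything
      rw [Set.eq_univ_iff_forall]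
      intro v
      obtain ⟨w, hw1, hw2⟩ : ∃ w : E, ℓ (v + w) + c ≠ 0 ∧ ℓ (v - w) + c ≠ 0 := by
        by_cases h1 : (ℓ v + c) + ℓ u ≠ 0 ∧ (ℓ v + c) - ℓ u ≠ 0
        · refine ⟨u, ?_, ?_⟩ <;> simp only [map_add, map_sub]
          · intro hcontra; exact h1.1 (by linear_combination hcontra)
          · intro hcontra; exact h1.2 (by linear_combination hcontra)
        · rw [not_and_or, not_not, not_not] at h1
          have hzne : ℓ v + c ≠ 0 := by
            rcases h1 with h1 | h1 <;> intro h0 <;>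
              [exact hu (by linear_combination h1 - h0);
               exact hu (by linear_combination h0 - h1)]
          refine ⟨(2 : ℂ) • u, ?_, ?_⟩ <;>
            simp only [map_add, map_sub, map_smul, smul_eq_mul] <;>
            intro hcontra <;> rcases h1 with h1 | h1 <;> apply hzne
          · linear_combination 2 * h1 - hcontra
          · linear_combination (2/3 : ℂ) * h1 + (1/3 : ℂ) * hcontra
          · linear_combination (2/3 : ℂ) * h1 + (1/3 : ℂ) * hcontra
          · linear_combination 2 * h1 - hcontra
      have hmid : midpoint ℝ (v + w) (v - w) = v := midpoint_add_sub ℝ v w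
      have hw1' : v + w ∈ {v : E | ℓ v + c ≠ 0} := hw1
      have hw2' : v - w ∈ {v : E | ℓ v + c ≠ 0} := hw2
      have hseg := segment_subset_convexHull (𝕜 := ℝ) hw1' hw2' (midpoint_mem_segment (v + w) (v - w))
      rwa [hmid] at hseg
end

section
/- Let m ≥ 1 and let f : (Fin m → ℝ) → ℂ be of class C². Define F : (Fin m → ℂ) → ℂ by F(z) = f(x_z) + i·Σ_{j} (D f(x_z))(δ_j) · Im(z_j), where x_z = (Re(z_j))_{j} ∈ ℝ^m, D f(x) denotes the real Fréchet derivative of f at x, and δ_j is the j-th standard basis vector of ℝ^m. Then: (i) F(x) = f(x) for every real point x (i.e., F agrees with f on the canonical copy of ℝ^m inside ℂ^m); (ii) F is of class C¹ over ℝ on all of ℂ^m; and (iii) at every real point x ∈ ℝ^m ⊂ ℂ^m the real Fréchet derivative of F is ℂ-linear, i.e., (fderiv ℝ F x)(i·v) = i·(fderiv ℝ F x)(v) for all v ∈ ℂ^m. -/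
open Complex

/-!
Write `F(z) = f(Re z) + i·Df(Re z)(Im z)`. At a real point `x` the chain and product rules give
`DF(x) v = Df(x)(Re v) + i·Df(x)(Im v) + i·D²f(x)(Re v)(Im x)`, and the last term vanishes because
`Im x = 0`. What remains is the `ℂ`-linear extension of `Df(x)`. `F` is `C¹` because `Df` is.
-/

section FirstOrderExtension

variable {ι : Type*}

noncomputable def piReCLM : (ι → ℂ) →L[ℝ] (ι → ℝ) :=
  ContinuousLinearMap.pi fun j => reCLM.comp (ContinuousLinearMap.proj j)

noncomputable def piImCLM : (ι → ℂ) →L[ℝ] (ι → ℝ) :=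
  ContinuousLinearMap.pi fun j => imCLM.comp (ContinuousLinearMap.proj j)

lemma piReCLM_apply (z : ι → ℂ) : piReCLM z = fun j => (z j).re := rfl

lemma piImCLM_apply (z : ι → ℂ) : piImCLM z = fun j => (z j).im := rfl

lemma piReCLM_ofReal (x : ι → ℝ) : piReCLM (fun j => (x j : ℂ)) = x := by
  ext j; simp [piReCLM_apply]

lemma piImCLM_ofReal (x : ι → ℝ) : piImCLM (fun j => (x j : ℂ)) = 0 := by
  ext j; simp [piImCLM_apply]

lemma piReCLM_I_smul (v : ι → ℂ) : piReCLM (I • v) = -piImCLM v := by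
  ext j; simp [piReCLM_apply, piImCLM_apply]

lemma piImCLM_I_smul (v : ι → ℂ) : piImCLM (I • v) = piReCLM v := by
  ext j; simp [piReCLM_apply, piImCLM_apply]

noncomputable def complexExtension (A : (ι → ℝ) →L[ℝ] ℂ) : (ι → ℂ) →L[ℝ] ℂ :=
  A.comp piReCLM + I • A.comp piImCLM

lemma complexExtension_I_smul (A : (ι → ℝ) →L[ℝ] ℂ) (v : ι → ℂ) :
    complexExtension A (I • v) = I * complexExtension A v := by
  simp only [complexExtension, add_apply, smul_apply,
    ContinuousLinearMap.comp_apply, piReCLM_I_smul, piImCLM_I_smul, map_neg, smul_eq_mul]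
  linear_combination -A (piImCLM v) * I_mul_I

lemma ContinuousLinearMap.apply_eq_sum_apply_single_mul [Fintype ι] [DecidableEq ι]
    (A : (ι → ℝ) →L[ℝ] ℂ) (y : ι → ℝ) : A y = ∑ j, A (Pi.single j 1) * (y j : ℂ) := by
  conv_lhs => rw [← Finset.univ_sum_single y]
  refine (map_sum A _ _).trans (Finset.sum_congr rfl fun j _ => ?_)
  rw [show Pi.single j (y j) = y j • Pi.single j (1 : ℝ) by rw [← Pi.single_smul', smul_eq_mul,
    mul_one], map_smul, real_smul, mul_comm]

noncomputable def firstOrderExtension (f : (ι → ℝ) → ℂ) (z : ι → ℂ) : ℂ :=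
  f (piReCLM z) + I * fderiv ℝ f (piReCLM z) (piImCLM z)

lemma firstOrderExtension_apply [Fintype ι] [DecidableEq ι] (f : (ι → ℝ) → ℂ) (z : ι → ℂ) :
    firstOrderExtension f z = f (fun j => (z j).re) +
      I * ∑ j, fderiv ℝ f (fun j => (z j).re) (Pi.single j 1) * ((z j).im : ℂ) := by
  rw [firstOrderExtension, ContinuousLinearMap.apply_eq_sum_apply_single_mul]
  rfl

lemma firstOrderExtension_ofReal (f : (ι → ℝ) → ℂ) (x : ι → ℝ) :
    firstOrderExtension f (fun j => (x j : ℂ)) = f x := by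
  rw [firstOrderExtension, piReCLM_ofReal, piImCLM_ofReal, map_zero, mul_zero, add_zero]

variable [Fintype ι]

lemma ContDiff.firstOrderExtension {f : (ι → ℝ) → ℂ} {n k : WithTop ℕ∞} (hf : ContDiff ℝ n f)
    (hk : k + 1 ≤ n) : ContDiff ℝ k (firstOrderExtension f) :=
  ((hf.of_le (le_self_add.trans hk)).comp piReCLM.contDiff).add <| contDiff_const.mul <|
    ((hf.fderiv_right hk).comp piReCLM.contDiff).clm_apply piImCLM.contDiff

lemma hasFDerivAt_firstOrderExtension_ofReal {f : (ι → ℝ) → ℂ} {x : ι → ℝ}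
    (hf : DifferentiableAt ℝ f x) (hDf : DifferentiableAt ℝ (fderiv ℝ f) x) :
    HasFDerivAt (firstOrderExtension f) (complexExtension (fderiv ℝ f x))
      (fun j => (x j : ℂ)) := by
  rw [← piReCLM_ofReal x] at hf hDf
  have hfre := hf.hasFDerivAt.comp _ piReCLM.hasFDerivAt
  have hDfre := (hDf.hasFDerivAt.comp _ piReCLM.hasFDerivAt).clm_apply piImCLM.hasFDerivAt
  refine (hfre.add (hDfre.const_mul I)).congr_fderiv ?_
  simp only [Function.comp_apply, piReCLM_ofReal, piImCLM_ofReal, map_zero, add_zero,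
    complexExtension]

end FirstOrderExtension

theorem dbar_flat_first_order_extension_general
    (m : ℕ) (f : (Fin m → ℝ) → ℂ) (hf : ContDiff ℝ 2 f)
    (F : (Fin m → ℂ) → ℂ)
    (hF : F = fun z => f (fun j => (z j).re) +
      Complex.I * ∑ j, fderiv ℝ f (fun j => (z j).re) (Pi.single j 1) * ((z j).im : ℂ)) :
    (∀ x : Fin m → ℝ, F (fun j => (x j : ℂ)) = f x) ∧
    ContDiff ℝ 1 F ∧
    (∀ (x : Fin m → ℝ) (v : Fin m → ℂ),
      fderiv ℝ F (fun j => (x j : ℂ)) (Complex.I • v) =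
        Complex.I * fderiv ℝ F (fun j => (x j : ℂ)) v) := by
  obtain rfl : F = firstOrderExtension f :=
    hF.trans (funext fun z => (firstOrderExtension_apply f z).symm)
  refine ⟨firstOrderExtension_ofReal f, hf.firstOrderExtension (k := 1) le_rfl, fun x v => ?_⟩
  have hDf : Differentiable ℝ (fderiv ℝ f) :=
    (hf.fderiv_right (m := 1) (by norm_num)).differentiable one_ne_zero
  rw [(hasFDerivAt_firstOrderExtension_ofReal (hf.differentiable two_ne_zero x) (hDf x)).fderiv]
  exact complexExtension_I_smul _ v

/-- First-order ∂̄-flat extension: given a `C²` function `f` on `ℝ^m`, the function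
`F(z) = f(Re z) + i·Σⱼ (Df(Re z))(δⱼ)·Im(zⱼ)` on `ℂ^m` agrees with `f` on `ℝ^m`,
is of class `C¹` over `ℝ`, and its real Fréchet derivative is ℂ-linear at every
real point (i.e. `F` is ∂̄-flat to first order on `ℝ^m`). -/
theorem dbar_flat_first_order_extension
    (m : ℕ) (hm : 1 ≤ m) (f : (Fin m → ℝ) → ℂ) (hf : ContDiff ℝ 2 f)
    (F : (Fin m → ℂ) → ℂ)
    (hF : F = fun z => f (fun j => (z j).re) +
      Complex.I * ∑ j, fderiv ℝ f (fun j => (z j).re) (Pi.single j 1) * ((z j).im : ℂ)) :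
    (∀ x : Fin m → ℝ, F (fun j => (x j : ℂ)) = f x) ∧
    ContDiff ℝ 1 F ∧
    (∀ (x : Fin m → ℝ) (v : Fin m → ℂ),
      fderiv ℝ F (fun j => (x j : ℂ)) (Complex.I • v) =
        Complex.I * fderiv ℝ F (fun j => (x j : ℂ)) v) :=
  dbar_flat_first_order_extension_general m f hf F hF
end

section
/- For every integer k define holomorphic functions A_k, B_k on ℂ∖{0} by A_k(x) = 1 and B_k(x) = x^{k+1}/(k+1) if k ≠ −1, and A_{−1}(x) = 1/(√2·x), B_{−1}(x) = x/√2. Then for every k ∈ ℤ and every x ∈ ℂ∖{0}, the Wronskian satisfies A_k(x)·B_k′(x) − A_k′(x)·B_k(x) = x^k (where x^k is the integer power zpow and derivatives are complex derivatives); in particular this Wronskian is nonvanishing on ℂ∖{0}. -/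
open Complex

section

variable {𝕜 : Type*} [NontriviallyNormedField 𝕜]

theorem hasDerivAt_zpow_add_one_div (k : ℤ) {x : 𝕜} (hk : (k : 𝕜) + 1 ≠ 0) (hx : x ≠ 0) :
    HasDerivAt (fun y => y ^ (k + 1) / ((k : 𝕜) + 1)) (x ^ k) x := by
  have h := (hasDerivAt_zpow (k + 1) x (.inl hx)).div_const ((k : 𝕜) + 1)
  rwa [Int.cast_add, Int.cast_one, add_sub_cancel_right, mul_div_cancel_left₀ _ hk] at h

theorem wronskian_inv_const_mul_div_const {c x : 𝕜} (hc : c ≠ 0) (hx : x ≠ 0) :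
    1 / (c * x) * deriv (fun y => y / c) x - deriv (fun y => 1 / (c * y)) x * (x / c) =
      2 / (c ^ 2 * x) := by
  have hB : HasDerivAt (fun y => y / c) (1 / c) x := (hasDerivAt_id x).div_const c
  have hA : HasDerivAt (fun y => 1 / (c * y)) (-c / (c * x) ^ 2) x := by
    simpa only [one_div, mul_one] using
      ((hasDerivAt_id' x).const_mul c).fun_inv (mul_ne_zero hc hx)
  rw [hA.deriv, hB.deriv]
  field_simp
  ring

end

/-- Example 1.9: the coefficient functions `A_k, B_k` of the contact forms
`α_k = A_k(x) dz + B_k(x) dy` on `ℂ* × ℂ²` have Wronskian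
`A_k·B_k′ − A_k′·B_k = x^k`, which is nonvanishing on `ℂ∖{0}`. -/
theorem wronskian_alpha_k (k : ℤ)
    (A B : ℂ → ℂ)
    (hA : A = fun x => if k = -1 then 1 / ((Real.sqrt 2 : ℂ) * x) else 1)
    (hB : B = fun x => if k = -1 then x / (Real.sqrt 2 : ℂ) else x ^ (k + 1) / ((k : ℂ) + 1)) :
    ∀ x : ℂ, x ≠ 0 →
      A x * deriv B x - deriv A x * B x = x ^ k ∧
      A x * deriv B x - deriv A x * B x ≠ 0 := by
  intro x hx
  have hW : A x * deriv B x - deriv A x * B x = x ^ k := by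
    subst hA hB
    rcases eq_or_ne k (-1) with rfl | hk
    · have hsqrt : ((Real.sqrt 2 : ℝ) : ℂ) ^ 2 = 2 := by
        rw [← ofReal_pow, Real.sq_sqrt zero_le_two, ofReal_ofNat]
      simp only [if_true]
      rw [wronskian_inv_const_mul_div_const (by simp) hx, hsqrt, zpow_neg_one]
      field_simp
    · have hk' : (k : ℂ) + 1 ≠ 0 := by exact_mod_cast (by omega : k + 1 ≠ 0)
      simp only [if_neg hk, deriv_const', one_mul, zero_mul, sub_zero]
      exact (hasDerivAt_zpow_add_one_div k hk' hx).deriv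
  exact ⟨hW, hW ▸ zpow_ne_zero k hx⟩
end

section
/- For t ∈ [0,1] ⊂ ℝ, let s_t = √(2(1+t²)) (real square root) and define holomorphic functions A_t, B_t on ℂ∖{0} by A_t(x) = (t·x + x⁻¹)/s_t and B_t(x) = (x − t·x⁻¹)·exp(−iπt/2)/s_t. Then: (i) for every t ∈ [0,1] and x ∈ ℂ∖{0}, the Wronskian satisfies A_t(x)·B_t′(x) − A_t′(x)·B_t(x) = exp(−iπt/2)·x⁻¹ (derivatives are complex derivatives in x), which is nonvanishing; (ii) at t = 0 one has A_0(x) = 1/(√2·x) and B_0(x) = x/√2; and (iii) at t = 1 one has A_1(x) = (x + x⁻¹)/2 and B_1(x) = (x − x⁻¹)/(2i). -/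
open Complex

/-!
Scaling a pair of functions by constants scales their Wronskian by the product of the constants,
so everything reduces to the Wronskian of `t·x + x⁻¹` and `x − t·x⁻¹`, which is `2(1 + t²)/x`.
The normalisation `√(2(1 + t²))` is chosen exactly to cancel that factor.
-/

section Wronskian

variable {𝕜 : Type*} [NontriviallyNormedField 𝕜]

noncomputable def wronskian (f g : 𝕜 → 𝕜) (x : 𝕜) : 𝕜 :=
  f x * deriv g x - deriv f x * g x

theorem wronskian_div_const (f g : 𝕜 → 𝕜) (a b x : 𝕜) :
    wronskian (fun y => f y / a) (fun y => g y / b) x = wronskian f g x / (a * b) := by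
  simp only [wronskian, deriv_div_const]
  ring

theorem wronskian_mul_const_right (f g : 𝕜 → 𝕜) (c x : 𝕜) :
    wronskian f (fun y => g y * c) x = wronskian f g x * c := by
  simp only [wronskian, deriv_mul_const_field]
  ring

theorem wronskian_mul_add_inv_sub_mul_inv (t : 𝕜) {x : 𝕜} (hx : x ≠ 0) :
    wronskian (fun y => t * y + y⁻¹) (fun y => y - t * y⁻¹) x = 2 * (1 + t ^ 2) / x := by
  have hf : HasDerivAt (fun y => t * y + y⁻¹) (t * 1 + -(x ^ 2)⁻¹) x :=
    ((hasDerivAt_id x).const_mul t).add (hasDerivAt_inv hx)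
  have hg : HasDerivAt (fun y => y - t * y⁻¹) (1 - t * -(x ^ 2)⁻¹) x :=
    (hasDerivAt_id x).sub ((hasDerivAt_inv hx).const_mul t)
  rw [wronskian, hf.deriv, hg.deriv]
  field_simp
  ring

theorem wronskian_normalized {t s c x : 𝕜} (hs : s ^ 2 = 2 * (1 + t ^ 2)) (hs0 : s ≠ 0)
    (hx : x ≠ 0) :
    wronskian (fun y => (t * y + y⁻¹) / s) (fun y => (y - t * y⁻¹) * c / s) x = c * x⁻¹ := by
  calc wronskian (fun y => (t * y + y⁻¹) / s) (fun y => (y - t * y⁻¹) * c / s) x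
      = wronskian (fun y => t * y + y⁻¹) (fun y => y - t * y⁻¹) x * c / (s * s) := by
        rw [wronskian_div_const _ (fun y => (y - t * y⁻¹) * c), wronskian_mul_const_right]
    _ = c * x⁻¹ := by
        have h2 : (2 : 𝕜) * (1 + t ^ 2) ≠ 0 := hs ▸ pow_ne_zero 2 hs0
        have h1 : 1 + t ^ 2 ≠ 0 := right_ne_zero_of_mul h2
        have h0 : (2 : 𝕜) ≠ 0 := left_ne_zero_of_mul h2
        rw [wronskian_mul_add_inv_sub_mul_inv t hx, ← sq, hs]
        field_simp

end Wronskian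

theorem ofReal_sqrt_two_mul_one_add_sq (t : ℝ) :
    ((√(2 * (1 + t ^ 2)) : ℝ) : ℂ) ^ 2 = 2 * (1 + (t : ℂ) ^ 2) := by
  rw [← ofReal_pow, Real.sq_sqrt (by positivity)]
  push_cast
  ring

/-- Example 1.9: the family `σ_t = A_t(x) dz + B_t(x) dy`, with
`A_t(x) = (t·x + x⁻¹)/√(2(1+t²))` and `B_t(x) = (x − t·x⁻¹)·e^{−iπt/2}/√(2(1+t²))`,
has Wronskian `A_t·B_t′ − A_t′·B_t = e^{−iπt/2}·x⁻¹` (nonvanishing on `ℂ∖{0}`) for all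
`t ∈ [0,1]`, and connects `σ_0 = α_{−1} = (1/√2)(x⁻¹ dz + x dy)` to
`σ_1 = α′ = ½(x + 1/x) dz + (1/(2i))(x − 1/x) dy`. -/
theorem wronskian_sigma_t
    (s : ℝ → ℝ) (hs : s = fun t => Real.sqrt (2 * (1 + t ^ 2)))
    (A B : ℝ → ℂ → ℂ)
    (hA : A = fun (t : ℝ) (x : ℂ) => ((t : ℂ) * x + x⁻¹) / ((s t : ℝ) : ℂ))
    (hB : B = fun (t : ℝ) (x : ℂ) =>
      (x - (t : ℂ) * x⁻¹) * Complex.exp (-Complex.I * Real.pi * t / 2) / ((s t : ℝ) : ℂ)) :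
    (∀ t ∈ Set.Icc (0 : ℝ) 1, ∀ x : ℂ, x ≠ 0 →
      A t x * deriv (B t) x - deriv (A t) x * B t x =
        Complex.exp (-Complex.I * Real.pi * t / 2) * x⁻¹ ∧
      A t x * deriv (B t) x - deriv (A t) x * B t x ≠ 0) ∧
    (∀ x : ℂ, x ≠ 0 →
      A 0 x = 1 / ((Real.sqrt 2 : ℂ) * x) ∧ B 0 x = x / (Real.sqrt 2 : ℂ)) ∧
    (∀ x : ℂ, x ≠ 0 →
      A 1 x = (x + x⁻¹) / 2 ∧ B 1 x = (x - x⁻¹) / (2 * Complex.I)) := by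
  subst hs hA hB
  refine ⟨fun t _ x hx => ?_, fun x _ => ?_, fun x _ => ?_⟩
  · have hs0 : ((√(2 * (1 + t ^ 2)) : ℝ) : ℂ) ≠ 0 := ofReal_ne_zero.mpr (by positivity)
    have hW := wronskian_normalized (c := exp (-I * Real.pi * t / 2))
      (ofReal_sqrt_two_mul_one_add_sq t) hs0 hx
    exact ⟨hW, fun h => mul_ne_zero (exp_ne_zero _) (inv_ne_zero hx) (hW.symm.trans h)⟩
  · norm_num [div_eq_mul_inv, mul_comm]
  · have hsqrt : √(2 * (1 + (1 : ℝ) ^ 2)) = 2 := by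
      rw [show (2 : ℝ) * (1 + 1 ^ 2) = 2 ^ 2 by norm_num, Real.sqrt_sq zero_le_two]
    have hexp : exp (-I * Real.pi * ((1 : ℝ) : ℂ) / 2) = exp (-Real.pi / 2 * I) := by
      congr 1
      push_cast
      ring
    simp only [hsqrt, hexp, exp_neg_pi_div_two_mul_I]
    push_cast
    refine ⟨by ring, ?_⟩
    field_simp
    linear_combination (1 - x ^ 2) * I_sq
end

section
/- For every triple of integers (k,l,m) define functions B : (ℂ∖{0})² → ℂ and C : (ℂ∖{0})² → ℂ by B(x,y) = x^{k+1}·y^l/(k+1) and C(x,z) = z^m if k ≠ −1, and B(x,y) = x·y^l and C(x,z) = z^m/(2x) if k = −1 (integer powers are zpow). Then for all x, y, z ∈ ℂ∖{0}: C(x,z)·∂_x B(x,y) − B(x,y)·∂_x C(x,z) = x^k·y^l·z^m, where ∂_x denotes the complex derivative in the first variable; in particular this expression is nonvanishing on (ℂ∖{0})³. -/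
open Complex

section Derivatives

variable {𝕜 : Type*} [NontriviallyNormedField 𝕜] {x : 𝕜}

theorem hasDerivAt_zpow_succ_mul_div [CharZero 𝕜] {n : ℤ} (hn : n ≠ -1) (hx : x ≠ 0) (c : 𝕜) :
    HasDerivAt (fun t => t ^ (n + 1) * c / ((n : 𝕜) + 1)) (x ^ n * c) x := by
  have hn' : (n : 𝕜) + 1 ≠ 0 := by exact_mod_cast (not_congr eq_neg_iff_add_eq_zero).mp hn
  refine (((hasDerivAt_zpow (n + 1) x (Or.inl hx)).mul_const c).div_const _).congr_deriv ?_
  rw [add_sub_cancel_right]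
  push_cast
  field_simp

theorem hasDerivAt_div_two_mul (c : 𝕜) (hx : x ≠ 0) :
    HasDerivAt (fun t => c / (2 * t)) (-c / (2 * x ^ 2)) x := by
  have h := (hasDerivAt_inv hx).const_mul (c / 2)
  rw [show (fun t => c / 2 * t⁻¹) = fun t => c / (2 * t) by ext; ring] at h
  exact h.congr_deriv (by ring)

end Derivatives

/-- Example 1.10: the coefficients of the contact forms `α_{k,l,m}` on `(ℂ*)³` satisfy
`C·∂ₓB − B·∂ₓC = x^k·y^l·z^m`, which is nonvanishing on `(ℂ∖{0})³`. -/
theorem wronskian_alpha_klm (k l m : ℤ)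
    (B : ℂ → ℂ → ℂ) (C : ℂ → ℂ → ℂ)
    (hB : B = fun (x y : ℂ) =>
      if k = -1 then x * y ^ l else x ^ (k + 1) * y ^ l / ((k : ℂ) + 1))
    (hC : C = fun (x z : ℂ) => if k = -1 then z ^ m / (2 * x) else z ^ m) :
    ∀ x y z : ℂ, x ≠ 0 → y ≠ 0 → z ≠ 0 →
      C x z * deriv (fun x' => B x' y) x - B x y * deriv (fun x' => C x' z) x =
        x ^ k * y ^ l * z ^ m ∧
      C x z * deriv (fun x' => B x' y) x - B x y * deriv (fun x' => C x' z) x ≠ 0 := by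
  intro x y z hx hy hz
  have hwronskian : C x z * deriv (fun x' => B x' y) x - B x y * deriv (fun x' => C x' z) x =
      x ^ k * y ^ l * z ^ m := by
    subst hB hC
    by_cases hk : k = -1
    · simp only [hk, ↓reduceIte]
      rw [((hasDerivAt_id' x).mul_const (y ^ l)).deriv, (hasDerivAt_div_two_mul _ hx).deriv]
      field_simp
      ring
    · simp only [hk, ↓reduceIte]
      rw [(hasDerivAt_zpow_succ_mul_div hk hx _).deriv, deriv_const]
      ring
  refine ⟨hwronskian, hwronskian ▸ ?_⟩
  exact mul_ne_zero (mul_ne_zero (zpow_ne_zero _ hx) (zpow_ne_zero _ hy)) (zpow_ne_zero _ hz)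
end
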